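/- arXiv:cs/0202023 — 6 statements merged into one kernel-verified Lean document; each statement's English description precedes it below -/
import Mathlib

section
/- Let λ be a standard real with 0 < λ < 1, and let a, b, c be nonnegative hyperreals with a = λb + (1-λ)c. If ¬(a ≻ b) and ¬(a ≻ c) are replaced by a ⪯ b and a ⪯ c (i.e., neither b nor c is qualitatively smaller than a), then a ∼ b and a ∼ c. -/
/-
Write `a = λb + (1-λ)c`. Then `b - a = (1-λ)(b - c)` and `a - c = λ(b - c)`, so
`a - c = λ/(1-λ) · (b - a)`. Hence if `b` is qualitatively larger than `a`, i.e.
`b - a ≥ r b` for a standard `r > 0`, then `a - c ≥ λr/(1-λ) · b ≥ λr/(1-λ) · a`, so `a` is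
qualitatively larger than `c`. Contrapositively, `a ⪯ c` forces `b ⪯ a`, and symmetrically
(`a = (1-λ)c + λb`) `a ⪯ b` forces `c ⪯ a`.
-/

open Hyperreal

/-- `x` is qualitatively larger than `y`. -/
def QGT (x y : ℝ*) : Prop := ∃ r : ℝ, 0 < r ∧ (r : ℝ*) ≤ (x - y) / x

/-- qualitative indifference -/
def QSIM (x y : ℝ*) : Prop := ¬ QGT x y ∧ ¬ QGT y x

lemma le_div_sub_of_le_div_sub_of_eq_convexComb {K : Type*} [Field K] [LinearOrder K]
    [IsStrictOrderedRing K] {l r a b c : K} (hl0 : 0 < l) (hl1 : l < 1) (hr : 0 < r)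
    (hb : 0 ≤ b) (hc : 0 ≤ c) (heq : a = l * b + (1 - l) * c) (h : r ≤ (b - a) / b) :
    l * r / (1 - l) ≤ (a - c) / a := by
  have hl1' : 0 < 1 - l := sub_pos.2 hl1
  have hb0 : 0 < b := by
    refine hb.lt_of_ne fun hb0 => ?_
    rw [← hb0, div_zero] at h
    exact hr.not_ge h
  have hba : r * b ≤ b - a := (le_div_iff₀ hb0).1 h
  have hac : a - c = l / (1 - l) * (b - a) := by
    field_simp
    linear_combination heq
  have hac_lower : l * r / (1 - l) * b ≤ a - c := by
    rw [hac, mul_div_right_comm, mul_assoc]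
    exact mul_le_mul_of_nonneg_left hba (div_pos hl0 hl1').le
  have hcoef : 0 < l * r / (1 - l) := by positivity
  have ha0 : 0 < a := by nlinarith
  calc l * r / (1 - l) ≤ (a - c) / b := (le_div_iff₀ hb0).2 hac_lower
    _ ≤ (a - c) / a := div_le_div_of_nonneg_left (by nlinarith) ha0 (by nlinarith)

lemma qgt_of_qgt_of_eq_convexComb {l : ℝ} (hl0 : 0 < l) (hl1 : l < 1) {a b c : ℝ*}
    (hb : 0 ≤ b) (hc : 0 ≤ c) (heq : a = (l : ℝ*) * b + ((1 : ℝ*) - (l : ℝ*)) * c)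
    (h : QGT b a) : QGT a c := by
  obtain ⟨r, hr, hle⟩ := h
  refine ⟨l * r / (1 - l), by have := sub_pos.2 hl1; positivity, ?_⟩
  push_cast
  exact le_div_sub_of_le_div_sub_of_eq_convexComb (by exact_mod_cast hl0)
    (by exact_mod_cast hl1) (by exact_mod_cast hr) hb hc heq hle

theorem stmt12_general (l : ℝ) (hl0 : 0 < l) (hl1 : l < 1) (a b c : ℝ*)
    (hb : 0 ≤ b) (hc : 0 ≤ c)
    (heq : a = (l : ℝ*) * b + ((1 : ℝ*) - (l : ℝ*)) * c)
    (hab : ¬ QGT a b) (hac : ¬ QGT a c) : QSIM a b ∧ QSIM a c := by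
  have heq' : a = ((1 - l : ℝ) : ℝ*) * c + ((1 : ℝ*) - ((1 - l : ℝ) : ℝ*)) * b := by
    push_cast
    linear_combination heq
  refine ⟨⟨hab, fun h => hac ?_⟩, ⟨hac, fun h => hab ?_⟩⟩
  · exact qgt_of_qgt_of_eq_convexComb hl0 hl1 hb hc heq h
  · exact qgt_of_qgt_of_eq_convexComb (sub_pos.2 hl1) (sub_lt_self 1 hl0) hc hb heq' h

theorem stmt12 (l : ℝ) (hl0 : 0 < l) (hl1 : l < 1) (a b c : ℝ*)
    (ha : 0 ≤ a) (hb : 0 ≤ b) (hc : 0 ≤ c)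
    (heq : a = (l : ℝ*) * b + ((1 : ℝ*) - (l : ℝ*)) * c)
    (hab : ¬ QGT a b) (hac : ¬ QGT a c) : QSIM a b ∧ QSIM a c :=
  stmt12_general l hl0 hl1 a b c hb hc heq hab hac
end

section
/- Let n > 0 and λ₀,…,λ_{n-1} be strictly positive standard reals summing to 1. Let a, a₀,…,a_{n-1} be nonnegative hyperreals with a = Σᵢ λᵢ aᵢ and a ⪯ aᵢ for all i. Then a ∼ aᵢ for all i. -/
open Hyperreal

theorem stmt13 (n : ℕ) (hn : 0 < n) (l : Fin n → ℝ) (hl : ∀ i, 0 < l i)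
    (hsum : ∑ i, l i = 1) (a : ℝ*) (f : Fin n → ℝ*)
    (ha : 0 ≤ a) (hf : ∀ i, 0 ≤ f i)
    (heq : a = ∑ i, (l i : ℝ*) * f i)
    (hle : ∀ i, ¬ QGT a (f i)) : ∀ i, QSIM a (f i) := by
  intro j
  refine ⟨hle j, ?_⟩
  rintro ⟨r, hr, hrle⟩
  have hrr : (0 : ℝ*) < (r : ℝ*) := by exact_mod_cast hr
  -- f j must be positive
  rcases eq_or_lt_of_le (hf j) with hfj0 | hfj
  · rw [← hfj0] at hrle
    simp at hrle
    exact absurd hrle (not_le.2 hrr)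
  -- now `f j > 0`; rewrite the division
  rw [le_div_iff₀ hfj] at hrle
  -- case a = 0 impossible
  rcases eq_or_lt_of_le ha with ha0 | ha'
  · have hpos : (0 : ℝ*) < ∑ i, (l i : ℝ*) * f i := by
      refine Finset.sum_pos' (fun i _ => mul_nonneg ?_ (hf i))
        ⟨j, Finset.mem_univ j, mul_pos (by exact_mod_cast hl j) hfj⟩
      exact_mod_cast (hl i).le
    rw [← heq, ← ha0] at hpos
    exact lt_irrefl _ hpos
  -- main case: a > 0
  set s : ℝ := l j * r / 2 with hsdef
  have hs : 0 < s := div_pos (mul_pos (hl j) hr) two_pos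
  have hss : (0 : ℝ*) < (s : ℝ*) := by exact_mod_cast hs
  have hscast : ((s : ℝ) : ℝ*) = (l j : ℝ*) * (r : ℝ*) / 2 := by
    rw [hsdef]; push_cast; ring
  have hlj : (0 : ℝ*) < (l j : ℝ*) := by exact_mod_cast hl j
  -- every f i is at least (1-s)*a
  have hfi : ∀ i, ((1 : ℝ*) - (s : ℝ*)) * a ≤ f i := by
    intro i
    by_contra h
    push_neg at h
    apply hle i
    refine ⟨s, hs, ?_⟩
    rw [le_div_iff₀ ha']
    nlinarith [h]
  have key1 : (l j : ℝ*) * (f j - (1 - (s : ℝ*)) * a) ≤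
      ∑ i, (l i : ℝ*) * (f i - (1 - (s : ℝ*)) * a) := by
    refine Finset.single_le_sum (fun i _ => mul_nonneg ?_ (sub_nonneg.2 (hfi i)))
      (Finset.mem_univ j)
    exact_mod_cast (hl i).le
  have hcast1 : ∑ i, (l i : ℝ*) = 1 := by
    classical
    have h : ∀ t : Finset (Fin n), ((∑ i ∈ t, l i : ℝ) : ℝ*) = ∑ i ∈ t, (l i : ℝ*) := by
      intro t
      induction t using Finset.induction with
      | empty => simp
      | insert _ _ h ih => rw [Finset.sum_insert h, Finset.sum_insert h, Hyperreal.coe_add, ih]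
    rw [← h, hsum, Hyperreal.coe_one]
  have key2 : ∑ i, (l i : ℝ*) * (f i - (1 - (s : ℝ*)) * a) = a - (1 - (s : ℝ*)) * a := by
    have : ∑ i, (l i : ℝ*) * (f i - (1 - (s : ℝ*)) * a)
        = (∑ i, (l i : ℝ*) * f i) - (∑ i, (l i : ℝ*)) * ((1 - (s : ℝ*)) * a) := by
      rw [Finset.sum_mul, ← Finset.sum_sub_distrib]
      congr 1
      ext i
      ring
    rw [this, hcast1, ← heq, one_mul]
  rw [key2] at key1
  -- a ≤ f j
  have h1 : a ≤ f j := by nlinarith [mul_nonneg hrr.le (hf j)]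
  have h2 : (l j : ℝ*) * ((r : ℝ*) * a + (s : ℝ*) * a) ≤
      (l j : ℝ*) * (f j - (1 - (s : ℝ*)) * a) := by
    apply mul_le_mul_of_nonneg_left _ hlj.le
    nlinarith [mul_le_mul_of_nonneg_left h1 hrr.le]
  nlinarith [mul_pos (mul_pos hlj hrr) ha', mul_pos (mul_pos hlj hss) ha', hscast]
end

section
/- Let n > 0 and λ₀,…,λ_{n-1} be nonnegative standard reals summing to 1. Let a, a₀,…,a_{n-1} be nonnegative hyperreals with a = Σᵢ λᵢ aᵢ and a ⪯ aᵢ for all i. Then for every i with λᵢ > 0, a ∼ aᵢ. -/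
open Hyperreal

private lemma coe_sum' {n : ℕ} (s : Finset (Fin n)) (g : Fin n → ℝ) :
    ((∑ j ∈ s, g j : ℝ) : ℝ*) = ∑ j ∈ s, ((g j : ℝ) : ℝ*) := by
  classical
  induction s using Finset.induction with
  | empty => simp
  | insert _ _ h ih =>
      rw [Finset.sum_insert h, Finset.sum_insert h, Hyperreal.coe_add, ih]

theorem stmt14 (n : ℕ) (hn : 0 < n) (l : Fin n → ℝ) (hl : ∀ i, 0 ≤ l i)
    (hsum : ∑ i, l i = 1) (a : ℝ*) (f : Fin n → ℝ*)
    (ha : 0 ≤ a) (hf : ∀ i, 0 ≤ f i)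
    (heq : a = ∑ i, (l i : ℝ*) * f i)
    (hle : ∀ i, ¬ QGT a (f i)) : ∀ i, 0 < l i → QSIM a (f i) := by
  classical
  intro i hli
  refine ⟨hle i, ?_⟩
  rintro ⟨r, hr, hri⟩
  by_cases hfi : f i = 0
  · rw [hfi] at hri
    simp at hri
    have : (0:ℝ) < r := hr
    have h2 : ((r:ℝ*)) ≤ 0 := hri
    rw [← Hyperreal.coe_zero, Hyperreal.coe_le_coe] at h2
    linarith
  have hfi' : 0 < f i := lt_of_le_of_ne (hf i) (Ne.symm hfi)
  have key : a ≤ (1 - (r:ℝ*)) * f i := by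
    have h1 : (r:ℝ*) * f i ≤ f i - a := (le_div_iff₀ hfi').mp hri
    linarith
  by_cases ha0 : a = 0
  · -- then λ i * f i = 0 so f i = 0, contradiction
    have hnn : ∀ j ∈ Finset.univ, (0:ℝ*) ≤ (l j : ℝ*) * f j := fun j _ =>
      mul_nonneg (by rw [← Hyperreal.coe_zero, Hyperreal.coe_le_coe]; exact hl j) (hf j)
    have hs : ∑ j, (l j:ℝ*) * f j = 0 := by rw [← heq, ha0]
    have hzero : (l i : ℝ*) * f i = 0 :=
      (Finset.sum_eq_zero_iff_of_nonneg hnn).mp hs i (Finset.mem_univ i)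
    have hli' : ((l i : ℝ):ℝ*) ≠ 0 := by
      rw [Hyperreal.coe_ne_zero]; exact ne_of_gt hli
    exact hfi ((mul_eq_zero.mp hzero).resolve_left hli')
  have ha' : 0 < a := lt_of_le_of_ne ha (Ne.symm ha0)
  have hr1 : r < 1 := by
    by_contra h
    push_neg at h
    have h1 : (1:ℝ*) ≤ (r:ℝ*) := by
      rw [← Hyperreal.coe_one, Hyperreal.coe_le_coe]; exact h
    have : (1 - (r:ℝ*)) * f i ≤ 0 :=
      mul_nonpos_of_nonpos_of_nonneg (by linarith) (hf i)
    linarith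
  have hli1 : l i ≤ 1 := by
    rw [← hsum]
    exact Finset.single_le_sum (fun j _ => hl j) (Finset.mem_univ i)
  set e : ℝ := l i * r / 2 with he
  have he0 : 0 < e := by positivity
  -- from hle j : f j > (1 - e) * a
  have hfj : ∀ j, ((1 - e : ℝ) : ℝ*) * a ≤ f j := by
    intro j
    by_contra hcon
    push_neg at hcon
    apply hle j
    refine ⟨e, he0, ?_⟩
    rw [le_div_iff₀ ha']
    have : ((1:ℝ):ℝ*) - (e:ℝ*) = ((1 - e : ℝ):ℝ*) := by
      rw [Hyperreal.coe_sub]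
    have h2 : (1 - (e:ℝ*)) * a ≤ f j → False := by
      intro hcl
      exact absurd hcl (not_le.mpr (by rw [← Hyperreal.coe_one, this]; exact hcon))
    by_contra hc2
    push_neg at hc2
    exact h2 (by nlinarith [hc2])
  -- split the sum
  have hsplit : ∑ j, (l j:ℝ*) * f j
      = (l i:ℝ*) * f i + ∑ j ∈ Finset.univ.erase i, (l j:ℝ*) * f j :=
    (Finset.add_sum_erase _ _ (Finset.mem_univ i)).symm
  -- lower bound on erased sum
  have herase_sum : ∑ j ∈ Finset.univ.erase i, l j = 1 - l i := by
    have := Finset.add_sum_erase Finset.univ l (Finset.mem_univ i)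
    linarith [hsum ▸ this]
  have hlow : ((1 - l i : ℝ):ℝ*) * (((1 - e : ℝ):ℝ*) * a)
      ≤ ∑ j ∈ Finset.univ.erase i, (l j:ℝ*) * f j := by
    calc ((1 - l i : ℝ):ℝ*) * (((1 - e : ℝ):ℝ*) * a)
        = ∑ j ∈ Finset.univ.erase i, (l j:ℝ*) * (((1 - e : ℝ):ℝ*) * a) := by
          rw [← Finset.sum_mul, ← coe_sum', herase_sum]
      _ ≤ ∑ j ∈ Finset.univ.erase i, (l j:ℝ*) * f j := by
          apply Finset.sum_le_sum
          intro j _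
          exact mul_le_mul_of_nonneg_left (hfj j)
            (by rw [← Hyperreal.coe_zero, Hyperreal.coe_le_coe]; exact hl j)
  -- main inequality, multiplied through by (1 - r) ≥ 0
  have h1r : (0:ℝ*) < 1 - (r:ℝ*) := by
    have : ((0:ℝ):ℝ*) < ((1 - r : ℝ):ℝ*) := Hyperreal.coe_lt_coe.mpr (by linarith)
    rw [Hyperreal.coe_zero, Hyperreal.coe_sub, Hyperreal.coe_one] at this
    exact this
  have hmul : (l i : ℝ*) * a ≤ (1 - (r:ℝ*)) * ((l i:ℝ*) * f i) := by
    have hlpos : (0:ℝ*) ≤ (l i : ℝ*) := by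
      rw [← Hyperreal.coe_zero, Hyperreal.coe_le_coe]; exact le_of_lt hli
    calc (l i : ℝ*) * a ≤ (l i : ℝ*) * ((1 - (r:ℝ*)) * f i) :=
          mul_le_mul_of_nonneg_left key hlpos
      _ = (1 - (r:ℝ*)) * ((l i:ℝ*) * f i) := by ring
  -- combine
  have hbig : ((l i : ℝ):ℝ*) * a + (1 - (r:ℝ*)) * (((1 - l i : ℝ):ℝ*) * (((1 - e : ℝ):ℝ*) * a))
      ≤ (1 - (r:ℝ*)) * a := by
    calc ((l i : ℝ):ℝ*) * a + (1 - (r:ℝ*)) * (((1 - l i : ℝ):ℝ*) * (((1 - e : ℝ):ℝ*) * a))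
        ≤ (1 - (r:ℝ*)) * ((l i:ℝ*) * f i)
          + (1 - (r:ℝ*)) * (∑ j ∈ Finset.univ.erase i, (l j:ℝ*) * f j) := by
          have := mul_le_mul_of_nonneg_left hlow (le_of_lt h1r)
          linarith [hmul, this]
      _ = (1 - (r:ℝ*)) * (∑ j, (l j:ℝ*) * f j) := by rw [hsplit]; ring
      _ = (1 - (r:ℝ*)) * a := by rw [← heq]
  -- the standard-real coefficient inequality gives a contradiction
  have hc : (1 - r) < l i + (1 - r) * ((1 - l i) * (1 - e)) := by
    have h1 : (1 - r) * (1 - l i) * e ≤ e := by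
      nlinarith [mul_nonneg he0.le (mul_nonneg hr.le (sub_nonneg.mpr hli1)),
        mul_nonneg he0.le hli.le]
    nlinarith
  have hc' : ((1 - r : ℝ):ℝ*) < ((l i + (1 - r) * ((1 - l i) * (1 - e)) : ℝ):ℝ*) :=
    Hyperreal.coe_lt_coe.mpr hc
  -- expand casts
  have hexp : ((l i + (1 - r) * ((1 - l i) * (1 - e)) : ℝ):ℝ*)
      = (l i : ℝ*) + (1 - (r:ℝ*)) * (((1 - l i : ℝ):ℝ*) * ((1 - e : ℝ):ℝ*)) := by
    rw [Hyperreal.coe_add, Hyperreal.coe_mul, Hyperreal.coe_mul,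
      Hyperreal.coe_sub, Hyperreal.coe_one]
  have hexp2 : ((1 - r : ℝ):ℝ*) = 1 - (r:ℝ*) := by
    rw [Hyperreal.coe_sub, Hyperreal.coe_one]
  rw [hexp, hexp2] at hc'
  nlinarith [hbig, hc', ha']
end

section
/- Let u(p), u(q), u(r) be positive hyperreals with u(p) ≻ u(q) and such that u(r)/u(p) is finite. Then for every standard λ ∈ (0,1), λ·u(p) + (1-λ)·u(r) ≻ λ·u(q) + (1-λ)·u(r). (Qualitative independence in the non-overriding case.) -/
/-!
The two mixtures differ by `λ (u(p) - u(q))`, a standard multiple of the original gap, while the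
finiteness of `u(r)/u(p)` bounds the larger mixture by a standard multiple of `u(p)`. So the
relative gap shrinks by at most a standard factor and stays non-infinitesimal.
-/

open Hyperreal

theorem qgt_iff_exists_mul_le {x y : ℝ*} (hx : 0 < x) :
    QGT x y ↔ ∃ r : ℝ, 0 < r ∧ (r : ℝ*) * x ≤ x - y := by
  simp only [QGT, le_div_iff₀ hx]

theorem exists_le_mul_of_not_infinite_div {a b : ℝ*} (hb : 0 < b) (h : ¬ Infinite (a / b)) :
    ∃ C : ℝ, a ≤ C * b := by
  obtain ⟨-, C, -, hC⟩ := not_infinite_iff_exist_lt_gt.mp h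
  exact ⟨C, ((div_lt_iff₀ hb).mp hC).le⟩

theorem QGT.of_le_mul {x y x' y' : ℝ*} {c C : ℝ} (h : QGT x y) (hx : 0 < x) (hx' : 0 < x')
    (hc : 0 < c) (hle : x' ≤ C * x) (hdiff : c * (x - y) ≤ x' - y') : QGT x' y' := by
  obtain ⟨r, hr, hrx⟩ := (qgt_iff_exists_mul_le hx).mp h
  have hC : (0 : ℝ*) < C := pos_of_mul_pos_left (hx'.trans_le hle) hx.le
  have hC' : 0 < C := by exact_mod_cast hC
  refine (qgt_iff_exists_mul_le hx').mpr ⟨r * c / C, by positivity, ?_⟩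
  have hrcC : (0 : ℝ*) ≤ (r * c / C : ℝ) := by exact_mod_cast (by positivity : 0 ≤ r * c / C)
  calc ((r * c / C : ℝ) : ℝ*) * x' ≤ (r * c / C : ℝ) * (C * x) := by gcongr
    _ = c * (r * x) := by push_cast; field_simp
    _ ≤ c * (x - y) := by gcongr; exact_mod_cast hc.le
    _ ≤ x' - y' := hdiff

theorem stmt17_general (up uq ur : ℝ*) (hp : 0 < up) (hr : 0 < ur)
    (h : QGT up uq) (hfin : ¬ Infinite (ur / up)) :
    ∀ l : ℝ, 0 < l → l < 1 →
      QGT ((l : ℝ*) * up + ((1 : ℝ*) - (l : ℝ*)) * ur)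
          ((l : ℝ*) * uq + ((1 : ℝ*) - (l : ℝ*)) * ur) := by
  intro l hl0 hl1
  obtain ⟨C, hC⟩ := exists_le_mul_of_not_infinite_div hp hfin
  have hl0' : (0 : ℝ*) < l := by exact_mod_cast hl0
  have hl1' : (0 : ℝ*) ≤ 1 - l := sub_nonneg.mpr (by exact_mod_cast hl1.le)
  refine h.of_le_mul (C := l + (1 - l) * C) hp (by positivity) hl0 ?_ (le_of_eq (by ring))
  calc (l : ℝ*) * up + (1 - l) * ur ≤ l * up + (1 - l) * (C * up) := by gcongr
    _ = ((l + (1 - l) * C : ℝ) : ℝ*) * up := by push_cast; ring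

theorem stmt17 (up uq ur : ℝ*) (hp : 0 < up) (hq : 0 < uq) (hr : 0 < ur)
    (h : QGT up uq) (hfin : ¬ Infinite (ur / up)) :
    ∀ l : ℝ, 0 < l → l < 1 →
      QGT ((l : ℝ*) * up + ((1 : ℝ*) - (l : ℝ*)) * ur)
          ((l : ℝ*) * uq + ((1 : ℝ*) - (l : ℝ*)) * ur) :=
  stmt17_general up uq ur hp hr h hfin
end

section
/- Let x, y, z be positive hyperreals with x ≻ y ≻ z. Then there exists a standard real α ∈ (0,1) such that α·x + (1-α)·z ≻ y. (Qualitative version of the upper half of the continuity axiom, A'3.) -/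
open Hyperreal

/-
If `y ≤ (1 - r) x` then `α x ≻ y` for every standard `α ∈ (1 - r, 1)`, in particular for
`α = 1 - r/2`; adding the nonnegative term `(1 - α) z` only makes the left side larger.
-/

namespace QGT

variable {x y : ℝ*}

/-- The margin `r` can always be taken below `1`, since shrinking it weakens `y ≤ (1 - r) x`. -/
theorem iff_exists_le_mul (hx : 0 < x) :
    QGT x y ↔ ∃ r : ℝ, 0 < r ∧ r < 1 ∧ y ≤ (1 - (r : ℝ*)) * x := by
  constructor
  · rintro ⟨r, hr, hrxy⟩
    rw [le_div_iff₀ hx] at hrxy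
    refine ⟨min r (1 / 2), by positivity, by linarith [min_le_right r (1 / 2)], ?_⟩
    have hmin : ((min r (1 / 2) : ℝ) : ℝ*) ≤ r := by exact_mod_cast min_le_left r (1 / 2)
    nlinarith
  · rintro ⟨r, hr, -, hyx⟩
    exact ⟨r, hr, by rw [le_div_iff₀ hx]; linarith⟩

theorem of_le {x' : ℝ*} (hx : 0 < x) (h : QGT x y) (hxx' : x ≤ x') : QGT x' y := by
  obtain ⟨r, hr, hr1, hyx⟩ := (iff_exists_le_mul hx).1 h
  have hr1' : (0 : ℝ*) ≤ 1 - r := by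
    rw [sub_nonneg]; exact_mod_cast hr1.le
  exact (iff_exists_le_mul (hx.trans_le hxx')).2
    ⟨r, hr, hr1, hyx.trans (mul_le_mul_of_nonneg_left hxx' hr1')⟩

theorem exists_real_lt_one_mul (hx : 0 < x) (h : QGT x y) :
    ∃ a : ℝ, 0 < a ∧ a < 1 ∧ QGT ((a : ℝ*) * x) y := by
  obtain ⟨r, hr, hr1, hyx⟩ := (iff_exists_le_mul hx).1 h
  have ha : 0 < 1 - r / 2 := by linarith
  refine ⟨1 - r / 2, ha, by linarith, ?_⟩
  refine (iff_exists_le_mul (mul_pos (by exact_mod_cast ha) hx)).2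
    ⟨(r / 2) / (1 - r / 2), div_pos (by linarith) ha, (div_lt_one ha).2 (by linarith), ?_⟩
  have hs : (1 - (((r / 2) / (1 - r / 2) : ℝ) : ℝ*)) * (((1 - r / 2 : ℝ) : ℝ*) * x)
      = (1 - (r : ℝ*)) * x := by
    rw [← mul_assoc]
    congr 1
    norm_cast
    rw [sub_mul, one_mul, div_mul_cancel₀ _ ha.ne']
    ring
  rwa [hs]

end QGT

theorem stmt18_general (x y z : ℝ*) (hx : 0 < x) (hz : 0 < z)
    (h1 : QGT x y) :
    ∃ a : ℝ, 0 < a ∧ a < 1 ∧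
      QGT ((a : ℝ*) * x + ((1 : ℝ*) - (a : ℝ*)) * z) y := by
  obtain ⟨a, ha, ha1, hax⟩ := h1.exists_real_lt_one_mul hx
  have hza : 0 ≤ ((1 : ℝ*) - (a : ℝ*)) * z :=
    mul_nonneg (sub_nonneg.2 (by exact_mod_cast ha1.le)) hz.le
  exact ⟨a, ha, ha1, hax.of_le (mul_pos (by exact_mod_cast ha) hx) (le_add_of_nonneg_right hza)⟩

theorem stmt18 (x y z : ℝ*) (hx : 0 < x) (hy : 0 < y) (hz : 0 < z)
    (h1 : QGT x y) (h2 : QGT y z) :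
    ∃ a : ℝ, 0 < a ∧ a < 1 ∧
      QGT ((a : ℝ*) * x + ((1 : ℝ*) - (a : ℝ*)) * z) y :=
  stmt18_general x y z hx hz h1
end

section
/- Let x, y, z be positive hyperreals with x ≻ y ≻ z, and suppose y/x is not infinitesimal. Then there exists a standard real β ∈ (0,1) such that y ≻ β·x + (1-β)·z. (Qualitative version of the lower half of the continuity axiom, A''3, in the non-overriding case.) -/
open Hyperreal

theorem QGT.exists_lt_one_mul_le {y z : ℝ*} (hy : 0 < y) (hz : 0 < z) (h : QGT y z) :
    ∃ s : ℝ, 0 < s ∧ s < 1 ∧ (s : ℝ*) * y ≤ y - z := by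
  obtain ⟨s, hs, hsy⟩ := (qgt_iff_exists_mul_le hy).1 h
  refine ⟨s, hs, ?_, hsy⟩
  have : (s : ℝ*) * y < 1 * y := by linarith
  exact_mod_cast lt_of_mul_lt_mul_right this hy.le

theorem exists_real_le_of_not_infinitesimal {u : ℝ*} (hu : 0 < u) (h : ¬ Infinitesimal u) :
    ∃ e : ℝ, 0 < e ∧ e ≤ 1 ∧ (e : ℝ*) ≤ u := by
  rw [infinitesimal_def] at h
  push Not at h
  obtain ⟨e, he, heu⟩ := h
  have heu : (e : ℝ*) ≤ u := heu (lt_trans (by exact_mod_cast neg_neg_of_pos he) hu)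
  refine ⟨min e 1, lt_min he one_pos, min_le_right _ _, le_trans ?_ heu⟩
  exact_mod_cast min_le_left e 1

theorem stmt19_general (x y z : ℝ*) (hx : 0 < x) (hy : 0 < y) (hz : 0 < z)
    (h2 : QGT y z) (hni : ¬ Infinitesimal (y / x)) :
    ∃ b : ℝ, 0 < b ∧ b < 1 ∧
      QGT y ((b : ℝ*) * x + ((1 : ℝ*) - (b : ℝ*)) * z) := by
  obtain ⟨s, hs, hs1, hzy⟩ := h2.exists_lt_one_mul_le hy hz
  obtain ⟨e, he, he1, hex⟩ := exists_real_le_of_not_infinitesimal (div_pos hy hx) hni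
  rw [le_div_iff₀ hx] at hex
  have hb : (0 : ℝ) < e * s / 2 := by positivity
  refine ⟨e * s / 2, hb, by nlinarith, (qgt_iff_exists_mul_le hy).2 ⟨s / 2, half_pos hs, ?_⟩⟩
  have hbx : ((e * s / 2 : ℝ) : ℝ*) * x ≤ ((s / 2 : ℝ) : ℝ*) * y := by
    push_cast
    have : (0 : ℝ*) ≤ s / 2 := by exact_mod_cast (half_pos hs).le
    nlinarith
  have hbz : ((1 : ℝ*) - (e * s / 2 : ℝ)) * z ≤ z := by
    have : (0 : ℝ*) < (e * s / 2 : ℝ) := by exact_mod_cast hb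
    nlinarith
  push_cast at hbx hbz ⊢
  linarith

theorem stmt19 (x y z : ℝ*) (hx : 0 < x) (hy : 0 < y) (hz : 0 < z)
    (h1 : QGT x y) (h2 : QGT y z) (hni : ¬ Infinitesimal (y / x)) :
    ∃ b : ℝ, 0 < b ∧ b < 1 ∧
      QGT y ((b : ℝ*) * x + ((1 : ℝ*) - (b : ℝ*)) * z) :=
  stmt19_general x y z hx hy hz h2 hni
end
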